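/- Let R > 0 and let Π₁, Π₂ : [0,∞) → ℝ be measurable. Assume there exist a function ψ̃ : (0,∞) → (0,∞) with ψ̃(T)/log T → 0 as T → ∞ and a constant c > 0 such that for every T > R and every m ∈ {0,1,2}: (1) |∫_a^b (log(y−R+1))^m · Π₂(y) dy| ≤ c·ψ̃(T)^m for all a, b with R < a, b < T; (2) ∫_T^∞ Π₂(y) dy → 0 as T → ∞; (3) |Π₂(x)| ≤ c for all x ≥ R; and (4) Π₁ is Lebesgue integrable on [0,R]. Then ∫∫_{{(x,y) : 0 ≤ x < R ≤ y}} |φ^{(R,T)}(x) − φ^{(R,T)}(y)|² · Π₁(x)·Π₂(y) dx dy → 0 as T → ∞. -/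

import Mathlib

open MeasureTheory Filter

/-- The cutoff function `φ^{(R,T)}`: equal to `1` on `(-∞, R]`, to
`1 - log(x-R+1)/log(T-R+1)` on `[R, T]`, and to `0` on `[T, ∞)`. -/
noncomputable def phi (R T x : ℝ) : ℝ :=
  if x ≤ R then 1
  else if x ≤ T then 1 - Real.log (x - R + 1) / Real.log (T - R + 1)
  else 0

open Set Real Topology

/-! On `D_{<R}` we have `φ(x) = 1`, so the integrand factors and the integral is
`(∫_{[0,R)} Π₁) · J(T)` with `J(T) = ∫_R^∞ (1 - φ(y))² Π₂(y) dy`. Splitting at `T`,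
`J(T) = log(T-R+1)⁻² ∫_R^T log²(y-R+1) Π₂(y) dy + ∫_T^∞ Π₂`, so by hypothesis (1) with `m = 2`
(passed from interior subintervals to `(R, T)` by continuity of the primitive)
`|J(T)| ≤ c (ψ(T) / log(T-R+1))² + |∫_T^∞ Π₂|`, and both terms tend to `0`. -/

theorem tendsto_div_log_add {f : ℝ → ℝ} (a : ℝ)
    (hf : Tendsto (fun x => f x / log x) atTop (𝓝 0)) :
    Tendsto (fun x => f x / log (x + a)) atTop (𝓝 0) := by
  have hratio : Tendsto (fun x => log (x + a) / log x) atTop (𝓝 1) := by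
    have h := ((tendsto_log_comp_add_sub_log a).mul
      (tendsto_inv_atTop_zero.comp tendsto_log_atTop)).const_add 1
    rw [mul_zero, add_zero] at h
    refine h.congr' ?_
    filter_upwards [eventually_gt_atTop 1] with x hx
    have : log x ≠ 0 := (log_pos hx).ne'
    simp only [Function.comp_apply]
    field_simp
    ring
  have h := hf.mul (hratio.inv₀ one_ne_zero)
  rw [zero_mul] at h
  refine h.congr' ?_
  filter_upwards [eventually_gt_atTop 1] with x hx
  rw [inv_div, div_mul_div_cancel₀ (log_pos hx).ne']

theorem abs_setIntegral_Ioo_le_of_forall_abs_intervalIntegral_le {f : ℝ → ℝ} {a b M : ℝ}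
    (hab : a < b)
    (h : ∀ x y, a < x → x < b → a < y → y < b → |∫ t in x..y, f t| ≤ M) :
    |∫ t in Ioo a b, f t| ≤ M := by
  by_cases hf : IntegrableOn f (Ioo a b)
  · have hf' : IntegrableOn f (uIcc a b) := by
      rwa [uIcc_of_le hab.le, integrableOn_Icc_iff_integrableOn_Ioo]
    set G : ℝ → ℝ := fun u => ∫ t in a..u, f t
    have hG : ContinuousOn G (Icc a b) := by
      simpa only [uIcc_of_le hab.le] using intervalIntegral.continuousOn_primitive_interval hf'
    have hint : ∀ u ∈ Icc a b, IntervalIntegrable f volume a u := fun u hu =>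
      (hf'.mono_set <| by
        rw [uIcc_of_le hab.le, uIcc_of_le hu.1]; exact Icc_subset_Icc_right hu.2).intervalIntegrable
    have hclosure : closure (Ioo a b ×ˢ Ioo a b) = Icc a b ×ˢ Icc a b := by
      rw [closure_prod_eq, closure_Ioo hab.ne]
    have hcont : ContinuousOn (fun p : ℝ × ℝ => |G p.2 - G p.1|) (Icc a b ×ˢ Icc a b) :=
      ((hG.comp continuousOn_snd fun p hp => hp.2).sub
        (hG.comp continuousOn_fst fun p hp => hp.1)).abs
    -- `(a, b)` lies in the closure of `Ioo a b ×ˢ Ioo a b`, where the bound holds.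
    have hGab : |G b - G a| ≤ M := by
      refine le_on_closure (f := fun p : ℝ × ℝ => |G p.2 - G p.1|) (g := fun _ => M)
        (fun p hp => ?_) (hclosure ▸ hcont) continuousOn_const
        (hclosure ▸ ⟨⟨le_rfl, hab.le⟩, ⟨hab.le, le_rfl⟩⟩ : (a, b) ∈ closure (Ioo a b ×ˢ Ioo a b))
      rw [intervalIntegral.integral_interval_sub_left (hint _ (Ioo_subset_Icc_self hp.2))
        (hint _ (Ioo_subset_Icc_self hp.1))]
      exact h _ _ hp.1.1 hp.1.2 hp.2.1 hp.2.2
    simpa [G, intervalIntegral.integral_of_le hab.le, integral_Ioc_eq_integral_Ioo] using hGab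
  · have hM : 0 ≤ M := (abs_nonneg _).trans
      (h _ _ (left_lt_add_div_two.2 hab) (add_div_two_lt_right.2 hab)
        (left_lt_add_div_two.2 hab) (add_div_two_lt_right.2 hab))
    rwa [integral_undef hf, abs_zero]

section phi

variable {R T x : ℝ}

theorem phi_of_le (hx : x ≤ R) : phi R T x = 1 := if_pos hx

theorem phi_of_lt (hRT : R ≤ T) (hx : T < x) : phi R T x = 0 := by
  rw [phi, if_neg (by linarith), if_neg hx.not_ge]

theorem one_sub_phi_of_mem_Icc (hx : x ∈ Icc R T) :
    1 - phi R T x = log (x - R + 1) / log (T - R + 1) := by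
  rcases hx.1.eq_or_lt with rfl | hRx
  · simp [phi_of_le le_rfl]
  · rw [phi, if_neg hRx.not_ge, if_pos hx.2, sub_sub_cancel]

theorem setIntegral_phi_region (R T : ℝ) (f g : ℝ → ℝ) :
    ∫ p in {p : ℝ × ℝ | 0 ≤ p.1 ∧ p.1 < R ∧ R ≤ p.2},
        |phi R T p.1 - phi R T p.2| ^ 2 * (f p.1 * g p.2) =
      (∫ x in Ico 0 R, f x) * ∫ y in Ici R, (1 - phi R T y) ^ 2 * g y := by
  have hregion : {p : ℝ × ℝ | 0 ≤ p.1 ∧ p.1 < R ∧ R ≤ p.2} = Ico 0 R ×ˢ Ici R := by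
    ext p; simp [and_assoc]
  have hintegrand : EqOn (fun p : ℝ × ℝ => |phi R T p.1 - phi R T p.2| ^ 2 * (f p.1 * g p.2))
      (fun p => f p.1 * ((1 - phi R T p.2) ^ 2 * g p.2)) (Ico 0 R ×ˢ Ici R) := fun p hp => by
    simp only [phi_of_le hp.1.2.le, sq_abs]
    ring
  rw [hregion, setIntegral_congr_fun (measurableSet_Ico.prod measurableSet_Ici) hintegrand,
    Measure.volume_eq_prod, ← Measure.prod_restrict]
  exact integral_prod_mul f fun y => (1 - phi R T y) ^ 2 * g y

theorem setIntegral_Ici_one_sub_phi_sq {g : ℝ → ℝ} (hRT : R < T)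
    (hg : IntegrableOn (fun y => (1 - phi R T y) ^ 2 * g y) (Ici R)) :
    ∫ y in Ici R, (1 - phi R T y) ^ 2 * g y =
      (∫ y in Ioo R T, log (y - R + 1) ^ 2 * g y) / log (T - R + 1) ^ 2 +
        ∫ y in Ioi T, g y := by
  have hsplit : Ici R = Icc R T ∪ Ioi T := (Icc_union_Ioi_eq_Ici hRT.le).symm
  rw [hsplit, setIntegral_union (Set.disjoint_left.2 fun y hy hy' => hy'.not_ge hy.2)
    measurableSet_Ioi (hg.mono_set (hsplit ▸ subset_union_left))
    (hg.mono_set (hsplit ▸ subset_union_right)), ← integral_Icc_eq_integral_Ioo,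
    ← integral_div]
  congr 1
  · refine setIntegral_congr_fun measurableSet_Icc fun y hy => ?_
    rw [one_sub_phi_of_mem_Icc hy]
    ring
  · refine setIntegral_congr_fun measurableSet_Ioi fun y hy => ?_
    rw [phi_of_lt hRT.le hy]
    ring

theorem abs_setIntegral_Ici_one_sub_phi_sq_le {g : ℝ → ℝ} {M : ℝ} (hRT : R < T)
    (hM : |∫ y in Ioo R T, log (y - R + 1) ^ 2 * g y| ≤ M) :
    |∫ y in Ici R, (1 - phi R T y) ^ 2 * g y| ≤
      M / log (T - R + 1) ^ 2 + |∫ y in Ioi T, g y| := by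
  by_cases hg : IntegrableOn (fun y => (1 - phi R T y) ^ 2 * g y) (Ici R)
  · rw [setIntegral_Ici_one_sub_phi_sq hRT hg]
    refine (abs_add_le _ _).trans (add_le_add_left ?_ _)
    rw [abs_div, abs_of_nonneg (sq_nonneg (log (T - R + 1)))]
    gcongr
  · rw [integral_undef hg, abs_zero]
    have : 0 ≤ M := (abs_nonneg _).trans hM
    positivity

end phi

theorem stmt_7_general (R : ℝ) (Pi₁ Pi₂ : ℝ → ℝ)
    (ψ : ℝ → ℝ)
    (hψ : Tendsto (fun T : ℝ => ψ T / Real.log T) atTop (nhds 0))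
    (c : ℝ)
    (h1 : ∀ T : ℝ, R < T → ∀ m : ℕ, m ≤ 2 → ∀ a b : ℝ,
      R < a → a < T → R < b → b < T →
      |∫ y in a..b, (Real.log (y - R + 1)) ^ m * Pi₂ y| ≤ c * ψ T ^ m)
    (h2 : Tendsto (fun T : ℝ => ∫ y in Set.Ioi T, Pi₂ y) atTop (nhds 0)) :
    Tendsto (fun T : ℝ =>
        ∫ p in {p : ℝ × ℝ | 0 ≤ p.1 ∧ p.1 < R ∧ R ≤ p.2},
          |phi R T p.1 - phi R T p.2| ^ 2 * (Pi₁ p.1 * Pi₂ p.2))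
      atTop (nhds 0) := by
  have hbound : ∀ᶠ T in atTop, ‖∫ y in Ici R, (1 - phi R T y) ^ 2 * Pi₂ y‖ ≤
      c * (ψ T / log (T - R + 1)) ^ 2 + |∫ y in Ioi T, Pi₂ y| := by
    filter_upwards [eventually_gt_atTop R] with T hT
    rw [Real.norm_eq_abs, div_pow, ← mul_div_assoc]
    exact abs_setIntegral_Ici_one_sub_phi_sq_le hT
      (abs_setIntegral_Ioo_le_of_forall_abs_intervalIntegral_le hT (h1 T hT 2 le_rfl))
  have hψ' : Tendsto (fun T => ψ T / log (T - R + 1)) atTop (𝓝 0) := by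
    convert tendsto_div_log_add (1 - R) hψ using 4
    ring
  have hlim : Tendsto (fun T => c * (ψ T / log (T - R + 1)) ^ 2 + |∫ y in Ioi T, Pi₂ y|)
      atTop (𝓝 0) := by
    simpa using ((hψ'.pow 2).const_mul c).add h2.abs
  simpa only [setIntegral_phi_region, mul_zero] using
    (squeeze_zero_norm' hbound hlim).const_mul (∫ x in Ico 0 R, Pi₁ x)

theorem stmt_7 (R : ℝ) (hR : 0 < R) (Pi₁ Pi₂ : ℝ → ℝ)
    (hmeas₁ : Measurable Pi₁) (hmeas₂ : Measurable Pi₂)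
    (ψ : ℝ → ℝ) (hψpos : ∀ T : ℝ, 0 < T → 0 < ψ T)
    (hψ : Tendsto (fun T : ℝ => ψ T / Real.log T) atTop (nhds 0))
    (c : ℝ) (hc : 0 < c)
    (h1 : ∀ T : ℝ, R < T → ∀ m : ℕ, m ≤ 2 → ∀ a b : ℝ,
      R < a → a < T → R < b → b < T →
      |∫ y in a..b, (Real.log (y - R + 1)) ^ m * Pi₂ y| ≤ c * ψ T ^ m)
    (h2 : Tendsto (fun T : ℝ => ∫ y in Set.Ioi T, Pi₂ y) atTop (nhds 0))
    (h3 : ∀ x : ℝ, R ≤ x → |Pi₂ x| ≤ c)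
    (h4 : IntegrableOn Pi₁ (Set.Icc 0 R)) :
    Tendsto (fun T : ℝ =>
        ∫ p in {p : ℝ × ℝ | 0 ≤ p.1 ∧ p.1 < R ∧ R ≤ p.2},
          |phi R T p.1 - phi R T p.2| ^ 2 * (Pi₁ p.1 * Pi₂ p.2))
      atTop (nhds 0) :=
  stmt_7_general R Pi₁ Pi₂ ψ hψ c h1 h2
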